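/- Let Γ ∼_Z G be Morita equivalent groupoids with Haar systems μ_Γ, μ_G, and let μ_Z be the induced r-system on Z given by μ_Z^y(φ) := ∫_{G^{𝔰(z)}} φ(z·g) dμ_G^{𝔰(z)}(g) for any z with 𝔯(z) = y. Then μ_Z^y is well defined (independent of the choice of z ∈ Z_y), and is Γ-invariant: ∫ φ(z) dμ_Z^{r(γ)}(z) = ∫ φ(γ·z) dμ_Z^{s(γ)}(z) for all γ ∈ Γ and φ ∈ C_c(Z). -/
import Mathlib


open CategoryTheory

/-- A Morita equivalence between two groupoids `Γ` and `G`, implemented by a space `Z`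
carrying a left `Γ`-action and a right `G`-action.  We use the convention that a groupoid
arrow `γ : a ⟶ b` has range `r γ = a` and source `s γ = b`, so that the groupoid product
`γ · δ` (defined when `s γ = r δ`) is the categorical composition `γ ≫ δ`. -/
structure MoritaEquiv (Γ : Type*) (G : Type*) [Groupoid Γ] [Groupoid G]
    (Z : Type*) where
  /-- the generalized range map `𝔯 : Z → Γ⁰` -/
  rZ : Z → Γ
  /-- the generalized source map `𝔰 : Z → G⁰` -/
  sZ : Z → G
  /-- the left `Γ`-action: `γ · z` is defined when `s γ = 𝔯 z`. -/
  actL : ∀ (z : Z) ⦃y : Γ⦄, (y ⟶ rZ z) → Z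
  /-- the right `G`-action: `z · g` is defined when `𝔰 z = r g`. -/
  actR : ∀ (z : Z) ⦃x : G⦄, (sZ z ⟶ x) → Z
  rZ_actL : ∀ (z : Z) {y : Γ} (γ : y ⟶ rZ z), rZ (actL z γ) = y
  sZ_actL : ∀ (z : Z) {y : Γ} (γ : y ⟶ rZ z), sZ (actL z γ) = sZ z
  rZ_actR : ∀ (z : Z) {x : G} (g : sZ z ⟶ x), rZ (actR z g) = rZ z
  sZ_actR : ∀ (z : Z) {x : G} (g : sZ z ⟶ x), sZ (actR z g) = x
  actL_id : ∀ z : Z, actL z (𝟙 (rZ z)) = z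
  actL_comp : ∀ (z : Z) {y y' : Γ} (γ : y ⟶ rZ z) (δ : y' ⟶ y),
      actL z (δ ≫ γ) = actL (actL z γ) (δ ≫ eqToHom (rZ_actL z γ).symm)
  actR_id : ∀ z : Z, actR z (𝟙 (sZ z)) = z
  actR_comp : ∀ (z : Z) {x x' : G} (g : sZ z ⟶ x) (h : x ⟶ x'),
      actR z (g ≫ h) = actR (actR z g) (eqToHom (sZ_actR z g) ≫ h)
  act_comm : ∀ (z : Z) {y : Γ} {x : G} (γ : y ⟶ rZ z) (g : sZ z ⟶ x),
      actR (actL z γ) (eqToHom (sZ_actL z γ) ≫ g)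
        = actL (actR z g) (γ ≫ eqToHom (rZ_actR z g).symm)
  /-- the `Γ`-valued inner product: for `z, z'` with `𝔰 z = 𝔰 z'`, `⟨z,z'⟩_Γ` is the
  unique `γ` with `z = γ · z'`. -/
  τΓ : ∀ (z z' : Z), sZ z = sZ z' → (rZ z ⟶ rZ z')
  τΓ_spec : ∀ (z z' : Z) (h : sZ z = sZ z'), actL z' (τΓ z z' h) = z
  /-- the left action is free (so `⟨z,z'⟩_Γ` is unique): `Z → G⁰` is a principal
  `Γ`-bundle. -/
  actL_free : ∀ (z : Z) {y : Γ} (γ γ' : y ⟶ rZ z), actL z γ = actL z γ' → γ = γ'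
  /-- the left action is transitive on the fibres of `𝔰`. -/
  actL_trans : ∀ (z z' : Z), sZ z = sZ z' → ∃ (y : Γ) (γ : y ⟶ rZ z'), actL z' γ = z
  /-- the `G`-valued inner product: for `z, z'` with `𝔯 z = 𝔯 z'`, `⟨z,z'⟩_G` is the
  unique `g` with `z' = z · g`. -/
  τG : ∀ (z z' : Z), rZ z = rZ z' → (sZ z ⟶ sZ z')
  τG_spec : ∀ (z z' : Z) (h : rZ z = rZ z'), actR z (τG z z' h) = z'
  /-- the right action is free: `Z → Γ⁰` is a principal `G`-bundle. -/
  actR_free : ∀ (z : Z) {x : G} (g g' : sZ z ⟶ x), actR z g = actR z g' → g = g'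
  /-- the right action is transitive on the fibres of `𝔯`. -/
  actR_trans : ∀ (z z' : Z), rZ z = rZ z' → ∃ (x : G) (g : sZ z ⟶ x), actR z g = z'

open MeasureTheory

/-- A left Haar system on a groupoid `G`: a family of measures `μ^x` on the fibres
`G^x = r⁻¹(x)` (arrows with domain `x`), left invariant under translation. -/
structure HaarSystem (G : Type*) [Groupoid G]
    [∀ x : G, MeasurableSpace (Σ y : G, x ⟶ y)] where
  μ : ∀ x : G, Measure (Σ y : G, x ⟶ y)
  left_invariant : ∀ {x y : G} (g : x ⟶ y),
      Measure.map (fun p : Σ w : G, y ⟶ w => (⟨p.1, g ≫ p.2⟩ : Σ w : G, x ⟶ w)) (μ y)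
        = μ x


lemma haar_shift {G : Type*} [Groupoid G] [∀ x : G, MeasurableSpace (Σ y : G, x ⟶ y)]
    (HG : HaarSystem G) {x y : G} (g : x ⟶ y) (f : (Σ w : G, x ⟶ w) → ℝ)
    (hf : Integrable f (HG.μ x)) :
    ∫ p : Σ w : G, y ⟶ w, f ⟨p.1, g ≫ p.2⟩ ∂(HG.μ y) = ∫ q, f q ∂(HG.μ x) := by
  set T : (Σ w : G, y ⟶ w) → (Σ w : G, x ⟶ w) := fun p => ⟨p.1, g ≫ p.2⟩ with hTdef
  by_cases hT : AEMeasurable T (HG.μ y)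
  · have h1 : Measure.map T (HG.μ y) = HG.μ x := HG.left_invariant g
    rw [← h1] at hf
    rw [← h1, MeasureTheory.integral_map hT hf.1]
  · have h0 : Measure.map T (HG.μ y) = 0 := Measure.map_of_not_aemeasurable hT
    have hx : HG.μ x = 0 := by rw [← HG.left_invariant g]; exact h0
    have hy : HG.μ y = 0 := by
      have h2 := HG.left_invariant (Groupoid.inv g)
      rw [hx, Measure.map_zero] at h2
      exact h2.symm
    simp [hx, hy]

/-- Let `Γ ∼_Z G` with Haar systems `μ_Γ, μ_G`, and let `μ_Z` be the
induced `𝔯`-system, `μ_Z^y(φ) := ∫_{G^{𝔰(z)}} φ(z·g) dμ_G^{𝔰(z)}(g)` for any `z` with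
`𝔯(z) = y`.  Then `μ_Z^y` is well defined (independent of the choice of `z ∈ Z_y`), and
it is `Γ`-invariant: `∫ φ dμ_Z^{r(γ)} = ∫ φ(γ·z) dμ_Z^{s(γ)}` for every arrow `γ` of
`Γ`.  (Here `r γ` is the domain and `s γ` the codomain of `γ`.) -/
theorem induced_rsystem_welldefined_invariant {Γ G Z : Type*} [Groupoid Γ] [Groupoid G]
    [∀ x : Γ, MeasurableSpace (Σ y : Γ, x ⟶ y)]
    [∀ x : G, MeasurableSpace (Σ y : G, x ⟶ y)]
    (M : MoritaEquiv Γ G Z) (HΓ : HaarSystem Γ) (HG : HaarSystem G)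
    (φ : Z → ℝ)
    (hφ : ∀ z : Z, Integrable (fun p : Σ w : G, M.sZ z ⟶ w => φ (M.actR z p.2))
      (HG.μ (M.sZ z))) :
    (∀ z z' : Z, M.rZ z = M.rZ z' →
        ∫ p : Σ w : G, M.sZ z ⟶ w, φ (M.actR z p.2) ∂(HG.μ (M.sZ z))
          = ∫ p : Σ w : G, M.sZ z' ⟶ w, φ (M.actR z' p.2) ∂(HG.μ (M.sZ z'))) ∧
    (∀ {y y' : Γ} (γ : y ⟶ y') (z₁ z₂ : Z), M.rZ z₁ = y → ∀ h₂ : M.rZ z₂ = y',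
        ∫ p : Σ w : G, M.sZ z₁ ⟶ w, φ (M.actR z₁ p.2) ∂(HG.μ (M.sZ z₁))
          = ∫ p : Σ w : G, M.sZ z₂ ⟶ w,
              φ (M.actL (M.actR z₂ p.2)
                  ((γ ≫ eqToHom h₂.symm) ≫ eqToHom (M.rZ_actR z₂ p.2).symm))
              ∂(HG.μ (M.sZ z₂))) := by
  have part1 : ∀ z z' : Z, M.rZ z = M.rZ z' →
      ∫ p : Σ w : G, M.sZ z ⟶ w, φ (M.actR z p.2) ∂(HG.μ (M.sZ z))
        = ∫ p : Σ w : G, M.sZ z' ⟶ w, φ (M.actR z' p.2) ∂(HG.μ (M.sZ z')) := by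
    intro z z' h
    obtain ⟨x, g, hg⟩ := M.actR_trans z z' h
    subst hg
    rw [← haar_shift HG g (fun q => φ (M.actR z q.2)) (hφ z)]
    have e1 : ∀ p : Σ w : G, x ⟶ w, φ (M.actR z (g ≫ p.2))
        = φ (M.actR (M.actR z g) (eqToHom (M.sZ_actR z g) ≫ p.2)) :=
      fun p => congrArg φ (M.actR_comp z g p.2)
    simp only [e1]
    exact haar_shift HG (eqToHom (M.sZ_actR z g))
      (fun q => φ (M.actR (M.actR z g) q.2)) (hφ _)
  refine ⟨part1, ?_⟩
  intro y y' γ z₁ z₂ h₁ h₂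
  set δ : y ⟶ M.rZ z₂ := γ ≫ eqToHom h₂.symm with hδ
  have hr : M.rZ z₁ = M.rZ (M.actL z₂ δ) := by rw [M.rZ_actL]; exact h₁
  rw [part1 z₁ (M.actL z₂ δ) hr,
    ← haar_shift HG (eqToHom (M.sZ_actL z₂ δ))
      (fun q => φ (M.actR (M.actL z₂ δ) q.2)) (hφ _)]
  have e2 : ∀ p : Σ w : G, M.sZ z₂ ⟶ w,
      φ (M.actR (M.actL z₂ δ) (eqToHom (M.sZ_actL z₂ δ) ≫ p.2))
        = φ (M.actL (M.actR z₂ p.2) (δ ≫ eqToHom (M.rZ_actR z₂ p.2).symm)) :=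
    fun p => congrArg φ (M.act_comm z₂ δ p.2)
  simp only [e2]
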